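/- arXiv:2410.04150 — 3 statements merged into one kernel-verified Lean document; each statement's English description precedes it below -/
import Mathlib

section
/- Let s₋, s₊ : ℂ → R be (not necessarily unital) ℂ-algebra homomorphisms, set p := s₋(1) (which is an idempotent, since s₋ is multiplicative) and s := s₊(1), and let U := U_{π/2} be the rotation built from p. Then the maps t₋, t₊ : ℂ → M₂(R) defined by t₋(λ) := U · diag(s₋(λ), λ·p^⊥) · U^{−1} and t₊(λ) := U · diag(s₊(λ), λ·p^⊥) · U^{−1} are (not necessarily unital) ℂ-algebra homomorphisms; one has t₋(λ) = diag(0, λ·1) for all λ ∈ ℂ, and t₊(λ) = λ · [[p^⊥·s·p^⊥, −p^⊥·s·p], [−p·s·p^⊥, p·s·p + p^⊥]]. Moreover, if J is a two-sided ideal of R such that s₊(λ) − s₋(λ) ∈ J for all λ ∈ ℂ, then every entry of the matrix t₊(λ) − t₋(λ) lies in J. (This is the algebraic core of the standard form of level-one K-theory elements.) -/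
/-- The rotation operator `U_t` in `M₂(R)` built from an idempotent `p` of a
unital associative `ℂ`-algebra `R`:
`U_t = [[cos t · p + p^⊥, sin t · p], [− sin t · p, cos t · p + p^⊥]]`
where `p^⊥ = 1 − p`. -/
noncomputable def Umat {R : Type*} [Ring R] [Algebra ℂ R] (p : R) (t : ℝ) :
    Matrix (Fin 2) (Fin 2) R :=
  !![(Real.cos t : ℂ) • p + (1 - p), (Real.sin t : ℂ) • p;
     -((Real.sin t : ℂ) • p), (Real.cos t : ℂ) • p + (1 - p)]

/-- `t₋(λ) = U_{π/2} · diag(s₋(λ), λ·p^⊥) · U_{−π/2}` where `p = s₋(1)`. -/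
noncomputable def tMinus {R : Type*} [Ring R] [Algebra ℂ R]
    (sm : ℂ →ₙₐ[ℂ] R) (lam : ℂ) : Matrix (Fin 2) (Fin 2) R :=
  Umat (sm 1) (Real.pi / 2) * !![sm lam, 0; 0, lam • (1 - sm 1)] *
    Umat (sm 1) (-(Real.pi / 2))

/-- `t₊(λ) = U_{π/2} · diag(s₊(λ), λ·p^⊥) · U_{−π/2}` where `p = s₋(1)`. -/
noncomputable def tPlus {R : Type*} [Ring R] [Algebra ℂ R]
    (sm sp : ℂ →ₙₐ[ℂ] R) (lam : ℂ) : Matrix (Fin 2) (Fin 2) R :=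
  Umat (sm 1) (Real.pi / 2) * !![sp lam, 0; 0, lam • (1 - sm 1)] *
    Umat (sm 1) (-(Real.pi / 2))

/-!
Since `p` and `p^⊥` are complementary idempotents, `U_t` acts as the rotation by `t` on the
`p`-part and as the identity on the `p^⊥`-part, so `U_s U_t = U_{s+t}` and `U_{-t}` is the
inverse of `U_t`. Hence `t₋` and `t₊` are conjugates of the diagonal homomorphisms
`λ ↦ diag(s_±(λ), λ·p^⊥)` and are homomorphisms themselves. Writing `s_±(λ) = λ·s_±(1)` and
multiplying out gives the explicit forms; for `t₋` they collapse because `s₋(1) = p`. Finally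
`t₊(λ) − t₋(λ) = U · diag(s₊(λ) − s₋(λ), 0) · U⁻¹` has its entries in `J`.
-/

open Real Matrix

section Homs

variable {K A B : Type*} [CommSemiring K]

def diagHom [NonUnitalNonAssocSemiring A] [NonUnitalNonAssocSemiring B]
    [DistribMulAction K A] [DistribMulAction K B] (f g : A →ₙₐ[K] B) :
    A →ₙₐ[K] Matrix (Fin 2) (Fin 2) B where
  toFun x := !![f x, 0; 0, g x]
  map_smul' c x := by ext i j; fin_cases i <;> fin_cases j <;> simp
  map_zero' := by ext i j; fin_cases i <;> fin_cases j <;> simp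
  map_add' x y := by ext i j; fin_cases i <;> fin_cases j <;> simp
  map_mul' x y := by simp

variable [Semiring B] [Algebra K B]

def smulIdempotentHom {q : B} (hq : IsIdempotentElem q) : K →ₙₐ[K] B where
  toFun c := c • q
  map_smul' c x := smul_smul c x q |>.symm
  map_zero' := zero_smul K q
  map_add' x y := add_smul x y q
  map_mul' x y := by rw [smul_mul_smul_comm, hq.eq]

def conjOfMulEqOne (u v : B) (h : v * u = 1) : B →ₙₐ[K] B where
  toFun x := u * x * v
  map_smul' c x := by simp
  map_zero' := by simp
  map_add' x y := by simp [mul_add, add_mul]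
  map_mul' x y := by
    rw [show u * x * v * (u * y * v) = u * x * (v * u) * y * v by simp only [mul_assoc], h]
    simp only [mul_one, mul_assoc]

end Homs

section Rotation

variable {R : Type*} [Ring R] [Algebra ℂ R]

theorem Umat_mul_Umat {p : R} (hp : IsIdempotentElem p) (s t : ℝ) :
    Umat p s * Umat p t = Umat p (s + t) := by
  have hpq : p * (1 - p) = 0 := hp.mul_one_sub_self
  have hqp : (1 - p) * p = 0 := hp.one_sub_mul_self
  have hqq : (1 - p) * (1 - p) = 1 - p := hp.one_sub.eq
  ext i j
  fin_cases i <;> fin_cases j <;>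
    simp [Umat, Real.cos_add, Real.sin_add, add_mul, mul_add, hp.eq, hpq, hqp, hqq, smul_smul] <;>
    module

theorem Umat_zero (p : R) : Umat p 0 = 1 := by
  simp [Umat, one_fin_two]

theorem Umat_neg_mul_Umat {p : R} (hp : IsIdempotentElem p) (t : ℝ) :
    Umat p (-t) * Umat p t = 1 := by
  rw [Umat_mul_Umat hp, neg_add_cancel, Umat_zero]

theorem Umat_pi_div_two (p : R) : Umat p (π / 2) = !![1 - p, p; -p, 1 - p] := by
  simp [Umat]

theorem Umat_neg_pi_div_two (p : R) : Umat p (-(π / 2)) = !![1 - p, -p; p, 1 - p] := by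
  simp [Umat]

theorem Umat_pi_div_two_conj_diag (p a b : R) :
    Umat p (π / 2) * !![a, 0; 0, b] * Umat p (-(π / 2)) =
      !![(1 - p) * a * (1 - p) + p * b * p, -((1 - p) * a * p) + p * b * (1 - p);
         -(p * a * (1 - p)) + (1 - p) * b * p, p * a * p + (1 - p) * b * (1 - p)] := by
  rw [Umat_pi_div_two, Umat_neg_pi_div_two]
  simp [mul_assoc]

/-- `λ ↦ U_{π/2} · diag(s(λ), λ·p^⊥) · U_{-π/2}`: `t₋` and `t₊` are the cases `s = s₋`, `s = s₊`
with `p = s₋(1)`. -/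
noncomputable def rotatedDiagHom {p : R} (hp : IsIdempotentElem p) (s : ℂ →ₙₐ[ℂ] R) :
    ℂ →ₙₐ[ℂ] Matrix (Fin 2) (Fin 2) R :=
  (conjOfMulEqOne (Umat p (π / 2)) (Umat p (-(π / 2))) (Umat_neg_mul_Umat hp _)).comp
    (diagHom s (smulIdempotentHom hp.one_sub))

theorem rotatedDiagHom_apply {p : R} (hp : IsIdempotentElem p) (s : ℂ →ₙₐ[ℂ] R) (lam : ℂ) :
    rotatedDiagHom hp s lam =
      lam • !![(1 - p) * s 1 * (1 - p), -((1 - p) * s 1 * p);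
               -(p * s 1 * (1 - p)), p * s 1 * p + (1 - p)] := by
  have hs : s lam = lam • s 1 := by rw [← map_smul, smul_eq_mul, mul_one]
  change Umat p (π / 2) * !![s lam, 0; 0, lam • (1 - p)] * Umat p (-(π / 2)) = _
  rw [Umat_pi_div_two_conj_diag, hs]
  ext i j
  fin_cases i <;> fin_cases j <;>
    simp [hp.mul_one_sub_self, hp.one_sub_mul_self, hp.one_sub.eq]

theorem rotatedDiagHom_self_apply (s : ℂ →ₙₐ[ℂ] R) (hp : IsIdempotentElem (s 1)) (lam : ℂ) :
    rotatedDiagHom hp s lam = !![0, 0; 0, lam • (1 : R)] := by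
  rw [rotatedDiagHom_apply]
  ext i j
  fin_cases i <;> fin_cases j <;> simp [hp.eq, hp.mul_one_sub_self, hp.one_sub_mul_self]

theorem rotatedDiagHom_sub_mem_matrix {p : R} (hp : IsIdempotentElem p) {s₁ s₂ : ℂ →ₙₐ[ℂ] R}
    {J : TwoSidedIdeal R} (h : ∀ lam, s₁ lam - s₂ lam ∈ J) (lam : ℂ) :
    rotatedDiagHom hp s₁ lam - rotatedDiagHom hp s₂ lam ∈ J.matrix (Fin 2) := by
  have hdiff : rotatedDiagHom hp s₁ lam - rotatedDiagHom hp s₂ lam =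
      Umat p (π / 2) * !![s₁ lam - s₂ lam, 0; 0, 0] * Umat p (-(π / 2)) := by
    change Umat p (π / 2) * !![s₁ lam, 0; 0, lam • (1 - p)] * Umat p (-(π / 2)) -
      Umat p (π / 2) * !![s₂ lam, 0; 0, lam • (1 - p)] * Umat p (-(π / 2)) = _
    rw [← sub_mul, ← mul_sub]
    congr 2
    ext i j; fin_cases i <;> fin_cases j <;> simp
  rw [hdiff]
  refine J.matrix _ |>.mul_mem_right _ _ (J.matrix _ |>.mul_mem_left _ _ ?_)
  simp [Fin.forall_fin_two, h, J.zero_mem]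

end Rotation

/-- Let `s₋, s₊ : ℂ → R` be (not necessarily unital) `ℂ`-algebra homomorphisms,
`p := s₋(1)`, `s := s₊(1)`, `U := U_{π/2}`.  Then `t₋, t₊ : ℂ → M₂(R)` defined by
`t₋(λ) := U · diag(s₋(λ), λ·p^⊥) · U⁻¹` and `t₊(λ) := U · diag(s₊(λ), λ·p^⊥) · U⁻¹`
are (not necessarily unital) `ℂ`-algebra homomorphisms; `t₋(λ) = diag(0, λ·1)`,
and `t₊(λ) = λ · [[p^⊥·s·p^⊥, −p^⊥·s·p], [−p·s·p^⊥, p·s·p + p^⊥]]`.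
If moreover `J` is a two-sided ideal of `R` with `s₊(λ) − s₋(λ) ∈ J` for all `λ`,
then every entry of `t₊(λ) − t₋(λ)` lies in `J`. -/
theorem stmt3 {R : Type*} [Ring R] [Algebra ℂ R] (sm sp : ℂ →ₙₐ[ℂ] R) :
    (∀ x y : ℂ, tMinus sm (x + y) = tMinus sm x + tMinus sm y) ∧
    (∀ x y : ℂ, tMinus sm (x * y) = tMinus sm x * tMinus sm y) ∧
    (∀ (c x : ℂ), tMinus sm (c • x) = c • tMinus sm x) ∧
    (∀ x y : ℂ, tPlus sm sp (x + y) = tPlus sm sp x + tPlus sm sp y) ∧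
    (∀ x y : ℂ, tPlus sm sp (x * y) = tPlus sm sp x * tPlus sm sp y) ∧
    (∀ (c x : ℂ), tPlus sm sp (c • x) = c • tPlus sm sp x) ∧
    (∀ lam : ℂ, tMinus sm lam = !![0, 0; 0, lam • (1 : R)]) ∧
    (∀ lam : ℂ,
      tPlus sm sp lam =
        lam • !![(1 - sm 1) * sp 1 * (1 - sm 1), -((1 - sm 1) * sp 1 * sm 1);
                 -(sm 1 * sp 1 * (1 - sm 1)), sm 1 * sp 1 * sm 1 + (1 - sm 1)]) ∧
    (∀ J : TwoSidedIdeal R, (∀ lam : ℂ, sp lam - sm lam ∈ J) →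
      ∀ (lam : ℂ) (i j : Fin 2), (tPlus sm sp lam - tMinus sm lam) i j ∈ J) := by
  have hp : IsIdempotentElem (sm 1) := IsIdempotentElem.one.map sm
  have hMinus : tMinus sm = rotatedDiagHom hp sm := rfl
  have hPlus : tPlus sm sp = rotatedDiagHom hp sp := rfl
  rw [hMinus, hPlus]
  exact ⟨map_add _, map_mul _, map_smul _, map_add _, map_mul _, map_smul _,
    rotatedDiagHom_self_apply sm hp, rotatedDiagHom_apply hp sp,
    fun J hJ lam => (J.mem_matrix _ _).1 (rotatedDiagHom_sub_mem_matrix hp hJ lam)⟩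
end

section
/- Assume A is quadratik. Then for every g ∈ G the automorphism Γ_g maps the first column of Mₙ(A) into itself. -/
/-- An algebra `A` is *quadratik* if every element of `A` is a finite sum
`a₁b₁ + … + a_kb_k` of products of elements of `A`. -/
def IsQuadratik (A : Type*) [NonUnitalNonAssocSemiring A] : Prop :=
  ∀ x : A, ∃ l : List (A × A), x = (l.map fun p => p.1 * p.2).sum

/-- An algebra `A` is *faithful* if `a·b = 0` for all `b` implies `a = 0`. -/
def IsFaithful (A : Type*) [Mul A] [Zero A] : Prop :=
  ∀ a : A, (∀ b : A, a * b = 0) → a = 0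

/-- Left multiplication `L_a : A → A`, `L_a(x) = a·x`, as a `ℂ`-linear
endomorphism of `A` (an element of `𝓛_A(A)`). -/
def Lmul {A : Type*} [NonUnitalRing A] [Module ℂ A] [SMulCommClass ℂ A A]
    (a : A) : Module.End ℂ A where
  toFun x := a * x
  map_add' := mul_add a
  map_smul' c x := mul_smul_comm c a x

/-- Membership in `𝓛_A(A)`: a `ℂ`-linear endomorphism `T` of `A` belongs to
`𝓛_A(A)` iff it is right `A`-linear (`T(ab) = T(a)·b`) and adjointable (for all
`a` there is `d` with `a·T(x) = d·x` for all `x`). -/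
def MemLA {A : Type*} [NonUnitalRing A] [Module ℂ A]
    (T : Module.End ℂ A) : Prop :=
  (∀ a b : A, T (a * b) = T a * b) ∧ ∀ a : A, ∃ d : A, ∀ x : A, a * T x = d * x

/-- A matrix over `𝓛_A(A)` (i.e. over `Module.End ℂ A`) belongs to the copy of
`Mₙ(A)` iff all its entries are left multiplications `L_a` with `a ∈ A`. -/
def InMnA {A : Type*} [NonUnitalRing A] [Module ℂ A] [SMulCommClass ℂ A A]
    {n : ℕ} (X : Matrix (Fin n) (Fin n) (Module.End ℂ A)) : Prop :=
  ∀ i j, ∃ a : A, X i j = Lmul a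

/-- The upper-left corner copy of `A` in `Mₙ(𝓛_A(A))`: `a ↦ L_a·E₁₁`. -/
def cornerA {A : Type*} [NonUnitalRing A] [Module ℂ A] [SMulCommClass ℂ A A]
    {n : ℕ} [NeZero n] (a : A) : Matrix (Fin n) (Fin n) (Module.End ℂ A) :=
  Matrix.of fun i j => if i = 0 ∧ j = 0 then Lmul a else 0

/-- Identification of `Aⁿ` with the first column of `Mₙ(A)`: the vector `ξ`
corresponds to the matrix whose first column has entries `L_{ξᵢ}` and whose
other entries vanish. -/
def colMat {A : Type*} [NonUnitalRing A] [Module ℂ A] [SMulCommClass ℂ A A]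
    {n : ℕ} [NeZero n] (ξ : Fin n → A) :
    Matrix (Fin n) (Fin n) (Module.End ℂ A) :=
  Matrix.of fun i j => if j = 0 then Lmul (ξ i) else 0

lemma Lmul_zero {A : Type*} [NonUnitalRing A] [Module ℂ A]
    [SMulCommClass ℂ A A] : Lmul (0 : A) = 0 := by
  ext x
  exact zero_mul x

lemma cornerA_inMnA {A : Type*} [NonUnitalRing A] [Module ℂ A]
    [SMulCommClass ℂ A A] {n : ℕ} [NeZero n] (a : A) :
    InMnA (cornerA (n := n) a) := by
  intro i j
  by_cases h : i = 0 ∧ j = 0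
  · exact ⟨a, by simp [cornerA, h]⟩
  · exact ⟨0, by simp [cornerA, h, Lmul_zero]⟩

lemma colMat_inMnA {A : Type*} [NonUnitalRing A] [Module ℂ A]
    [SMulCommClass ℂ A A] {n : ℕ} [NeZero n] (ξ : Fin n → A) :
    InMnA (colMat ξ) := by
  intro i j
  by_cases h : j = 0
  · exact ⟨ξ i, by simp [colMat, h]⟩
  · exact ⟨0, by simp [colMat, h, Lmul_zero]⟩

section Aux

variable {A : Type*} [NonUnitalRing A] [Module ℂ A] [SMulCommClass ℂ A A]

lemma Lmul_add' (a b : A) : Lmul (a + b) = Lmul a + Lmul b := by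
  ext x; exact add_mul a b x

lemma Lmul_mul' (a b : A) : Lmul (a * b) = Lmul a * Lmul b := by
  ext x; exact mul_assoc a b x

/-- The matrix `L_a · E_{i0}`. -/
def eMat {n : ℕ} [NeZero n] (i : Fin n) (a : A) :
    Matrix (Fin n) (Fin n) (Module.End ℂ A) :=
  Matrix.of fun i' j' => if i' = i ∧ j' = 0 then Lmul a else 0

lemma eMat_inMnA {n : ℕ} [NeZero n] (i : Fin n) (a : A) :
    InMnA (eMat i a) := by
  intro i' j'
  by_cases h : i' = i ∧ j' = 0
  · exact ⟨a, by simp [eMat, h]⟩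
  · exact ⟨0, by simp [eMat, h, Lmul_zero]⟩

lemma InMnA_add {n : ℕ} {X Y : Matrix (Fin n) (Fin n) (Module.End ℂ A)}
    (hX : InMnA X) (hY : InMnA Y) : InMnA (X + Y) := by
  intro i j
  obtain ⟨a, ha⟩ := hX i j
  obtain ⟨b, hb⟩ := hY i j
  exact ⟨a + b, by simp [Matrix.add_apply, ha, hb, Lmul_add']⟩

lemma InMnA_zero {n : ℕ} :
    InMnA (0 : Matrix (Fin n) (Fin n) (Module.End ℂ A)) :=
  fun _ _ => ⟨0, by simp [Lmul_zero]⟩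

lemma mul_corner {n : ℕ} [NeZero n]
    (w : Matrix (Fin n) (Fin n) (Module.End ℂ A))
    (hw : ∀ i j, MemLA (w i j)) (b : A) (i j : Fin n) :
    (w * cornerA (n := n) b) i j = if j = 0 then Lmul (w i 0 b) else 0 := by
  rw [Matrix.mul_apply]
  by_cases hj : j = 0
  · subst hj
    rw [Finset.sum_eq_single (0 : Fin n)]
    · simp only [cornerA, Matrix.of_apply, and_self, if_true, if_pos rfl]
      ext x
      exact (hw i 0).1 b x
    · intro k _ hk
      simp [cornerA, hk]
    · simp
  · simp [cornerA, hj]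

lemma eMat_mul_corner {n : ℕ} [NeZero n] (i : Fin n) (a b : A) :
    eMat i a * cornerA b = eMat i (a * b) := by
  ext i' j'
  rw [Matrix.mul_apply, Finset.sum_eq_single (0 : Fin n)]
  · by_cases hi : i' = i <;> by_cases hj : j' = 0 <;>
      simp [eMat, cornerA, hi, hj, Lmul_mul']
  · intro k _ hk
    simp [cornerA, hk]
  · simp

lemma eMat_add {n : ℕ} [NeZero n] (i : Fin n) (a b : A) :
    eMat i (a + b) = eMat i a + eMat i b := by
  refine Matrix.ext fun i' j' => ?_
  by_cases h : i' = i ∧ j' = 0 <;> simp [eMat, h, Lmul_add']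

end Aux

theorem stmt7 (A : Type*) [NonUnitalRing A] [Module ℂ A]
    [SMulCommClass ℂ A A] [IsScalarTower ℂ A A]
    (hquad : IsQuadratik A)
    (n : ℕ) [NeZero n]
    (G : Type*) [Group G]
    (B : NonUnitalSubalgebra ℂ (Matrix (Fin n) (Fin n) (Module.End ℂ A)))
    (hB : ∀ x : B, ∀ i j,
      MemLA ((x : Matrix (Fin n) (Fin n) (Module.End ℂ A)) i j))
    (hMnA : ∀ X : Matrix (Fin n) (Fin n) (Module.End ℂ A), InMnA X → X ∈ B)
    (Γ : G →* RingAut B)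
    (hΓlin : ∀ (g : G) (c : ℂ) (x : B), Γ g (c • x) = c • Γ g x)
    (α : G →* RingAut A)
    (hαlin : ∀ (g : G) (c : ℂ) (a : A), α g (c • a) = c • α g a)
    (hequiv : ∀ (g : G) (a : A),
      ((Γ g ⟨cornerA a, hMnA _ (cornerA_inMnA a)⟩ : B) :
          Matrix (Fin n) (Fin n) (Module.End ℂ A)) = cornerA (α g a)) :
    ∀ (g : G) (X : Matrix (Fin n) (Fin n) (Module.End ℂ A)) (hX : InMnA X),
      (∀ i j, j ≠ 0 → X i j = 0) →
      InMnA ((Γ g ⟨X, hMnA X hX⟩ : B) :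
          Matrix (Fin n) (Fin n) (Module.End ℂ A)) ∧
      ∀ i j, j ≠ 0 →
        ((Γ g ⟨X, hMnA X hX⟩ : B) :
            Matrix (Fin n) (Fin n) (Module.End ℂ A)) i j = 0 := by
  classical
  intro g X hX hcol
  -- The key predicate
  set Q : B → Prop := fun x =>
    InMnA ((Γ g x : B) : Matrix (Fin n) (Fin n) (Module.End ℂ A)) ∧
    ∀ i j, j ≠ 0 →
      ((Γ g x : B) : Matrix (Fin n) (Fin n) (Module.End ℂ A)) i j = 0
    with hQ
  have Qzero : Q 0 := by
    have hz : Γ g (0 : B) = 0 := by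
      have h := (Γ g).map_add (0 : B) 0
      rw [add_zero] at h
      exact (add_eq_left.mp h.symm)
    have h0 : ((Γ g (0 : B) : B) : Matrix (Fin n) (Fin n) (Module.End ℂ A))
        = 0 := by rw [hz]; rfl
    refine ⟨?_, ?_⟩
    · rw [h0]; exact InMnA_zero
    · intro i j _; rw [h0]; rfl
  have Qadd : ∀ x y : B, Q x → Q y → Q (x + y) := by
    intro x y hx hy
    have hco : ((Γ g (x + y) : B) : Matrix (Fin n) (Fin n) (Module.End ℂ A))
        = ((Γ g x : B) : Matrix (Fin n) (Fin n) (Module.End ℂ A))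
          + ((Γ g y : B) : Matrix (Fin n) (Fin n) (Module.End ℂ A)) := by
      rw [(Γ g).map_add]; rfl
    refine ⟨?_, ?_⟩
    · rw [hco]; exact InMnA_add hx.1 hy.1
    · intro i j hj
      rw [hco, Matrix.add_apply, hx.2 i j hj, hy.2 i j hj, add_zero]
  have Qcorner : ∀ (x : B) (b : A),
      Q (x * ⟨cornerA b, hMnA _ (cornerA_inMnA b)⟩) := by
    intro x b
    have hco : ((Γ g (x * ⟨cornerA b, hMnA _ (cornerA_inMnA b)⟩) : B) :
          Matrix (Fin n) (Fin n) (Module.End ℂ A))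
        = ((Γ g x : B) : Matrix (Fin n) (Fin n) (Module.End ℂ A))
          * cornerA (α g b) := by
      rw [(Γ g).map_mul]
      have := hequiv g b
      calc ((Γ g x * Γ g ⟨cornerA b, hMnA _ (cornerA_inMnA b)⟩ : B) :
            Matrix (Fin n) (Fin n) (Module.End ℂ A))
          = ((Γ g x : B) : Matrix (Fin n) (Fin n) (Module.End ℂ A))
            * ((Γ g ⟨cornerA b, hMnA _ (cornerA_inMnA b)⟩ : B) :
                Matrix (Fin n) (Fin n) (Module.End ℂ A)) := rfl
        _ = _ := by rw [this]
    have hmul := mul_corner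
      ((Γ g x : B) : Matrix (Fin n) (Fin n) (Module.End ℂ A))
      (fun i j => hB (Γ g x) i j) (α g b)
    refine ⟨?_, ?_⟩
    · intro i j
      rw [hco, hmul i j]
      by_cases hj : j = 0
      · exact ⟨_, by rw [if_pos hj]⟩
      · exact ⟨0, by rw [if_neg hj, Lmul_zero]⟩
    · intro i j hj
      rw [hco, hmul i j, if_neg hj]
  have Qsum : ∀ (s : Finset (Fin n)) (f : Fin n → B),
      (∀ i ∈ s, Q (f i)) → Q (∑ i ∈ s, f i) := by
    intro s f
    induction s using Finset.cons_induction with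
    | empty => intro _; simpa using Qzero
    | cons a s ha ih =>
      intro h
      rw [Finset.sum_cons]
      exact Qadd _ _ (h a (Finset.mem_cons_self a s))
        (ih fun i hi => h i (Finset.mem_cons_of_mem hi))
  -- every element of `eMat i` with quadratik entry satisfies `Q`
  have Qlist : ∀ (l : List (A × A)) (i : Fin n),
      Q ⟨eMat i ((l.map fun p => p.1 * p.2).sum),
          hMnA _ (eMat_inMnA i _)⟩ := by
    intro l
    induction l with
    | nil =>
      intro i
      have : (⟨eMat i (([] : List (A × A)).map fun p => p.1 * p.2).sum,
          hMnA _ (eMat_inMnA i _)⟩ : B) = 0 := by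
        apply Subtype.ext
        show eMat i (([] : List (A × A)).map fun p => p.1 * p.2).sum = 0
        refine Matrix.ext fun i' j' => ?_
        simp [eMat, Lmul_zero]
      rw [this]; exact Qzero
    | cons p l ih =>
      intro i
      have hdec : (⟨eMat i (((p :: l).map fun q => q.1 * q.2).sum),
            hMnA _ (eMat_inMnA i _)⟩ : B)
          = (⟨eMat i p.1, hMnA _ (eMat_inMnA i _)⟩ : B)
              * ⟨cornerA p.2, hMnA _ (cornerA_inMnA p.2)⟩
            + ⟨eMat i ((l.map fun q => q.1 * q.2).sum),
                hMnA _ (eMat_inMnA i _)⟩ := by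
        apply Subtype.ext
        show eMat i (((p :: l).map fun q => q.1 * q.2).sum)
            = eMat i p.1 * cornerA p.2
              + eMat i ((l.map fun q => q.1 * q.2).sum)
        rw [eMat_mul_corner, List.map_cons, List.sum_cons, eMat_add]
      rw [hdec]
      exact Qadd _ _ (Qcorner _ _) (ih i)
  -- decompose `X` as a sum of first-column single-entry matrices
  have hXi : ∀ i : Fin n, X i 0 = Lmul (Classical.choose (hX i 0)) :=
    fun i => Classical.choose_spec (hX i 0)
  have hdecX : (⟨X, hMnA X hX⟩ : B)
      = ∑ i : Fin n, (⟨eMat i (Classical.choose (hX i 0)),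
          hMnA _ (eMat_inMnA i _)⟩ : B) := by
    apply Subtype.ext
    show X = _
    rw [AddSubmonoidClass.coe_finset_sum]
    refine Matrix.ext fun i' j' => ?_
    rw [Matrix.sum_apply]
    by_cases hj : j' = 0
    · subst hj
      rw [Finset.sum_eq_single i']
      · show X i' 0 = eMat i' (Classical.choose (hX i' 0)) i' 0
        have he : eMat i' (Classical.choose (hX i' 0)) i' 0
            = Lmul (Classical.choose (hX i' 0)) := by simp [eMat]
        rw [he]
        exact hXi i'
      · intro k _ hk
        show (⟨eMat k (Classical.choose (hX k 0)),
            hMnA _ (eMat_inMnA k _)⟩ : B).val i' 0 = 0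
        simp [eMat, Ne.symm hk]
      · simp
    · rw [hcol i' j' hj]
      symm
      apply Finset.sum_eq_zero
      intro k _
      simp [eMat, hj]
  rw [hdecX]
  apply Qsum Finset.univ
    (fun i => (⟨eMat i (Classical.choose (hX i 0)),
      hMnA _ (eMat_inMnA i _)⟩ : B))
  intro i _
  obtain ⟨l, hl⟩ := hquad (Classical.choose (hX i 0))
  have heq : (⟨eMat i (Classical.choose (hX i 0)),
        hMnA _ (eMat_inMnA i _)⟩ : B)
      = ⟨eMat i ((l.map fun p => p.1 * p.2).sum),
          hMnA _ (eMat_inMnA i _)⟩ := by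
    apply Subtype.ext
    show eMat i (Classical.choose (hX i 0)) = _
    rw [← hl]
  rw [heq]
  exact Qlist l i
end

section
/- Assume A is quadratik and faithful, identify Aⁿ with the first column of Mₙ(A), and let γ_g denote the additive bijection of Aⁿ obtained by restricting Γ_g to the first column. Then for all g ∈ G, X ∈ B and ξ ∈ Aⁿ one has ψ(Γ_g(X))(ξ) = γ_g( ψ(X)( γ_{g⁻¹}(ξ) ) ), where ψ is the matrix–vector multiplication map ψ(X)(ξ)_i := Σ_j X_{ij}(ξ_j); that is, ψ intertwines the action Γ on B with the adjoint action of γ on endomorphisms of Aⁿ. -/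
/-- The matrix–vector multiplication map `ψ : Mₙ(𝓛_A(A)) → Maps(Aⁿ, Aⁿ)`,
`ψ(X)(ξ)ᵢ := Σⱼ Xᵢⱼ(ξⱼ)`. -/
def psiMap {A : Type*} [NonUnitalRing A] [Module ℂ A] {n : ℕ}
    (X : Matrix (Fin n) (Fin n) (Module.End ℂ A)) (ξ : Fin n → A) : Fin n → A :=
  fun i => ∑ j, X i j (ξ j)

lemma Lmul_inj {A : Type*} [NonUnitalRing A] [Module ℂ A]
    [SMulCommClass ℂ A A] (hfaith : IsFaithful A) :
    Function.Injective (Lmul (A := A)) := by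
  intro a b h
  have h' : ∀ x : A, a * x = b * x := fun x => LinearMap.congr_fun h x
  have hz : ∀ x : A, (a - b) * x = 0 := fun x => by rw [sub_mul, h' x, sub_self]
  exact sub_eq_zero.mp (hfaith _ hz)

lemma colMat_inj {A : Type*} [NonUnitalRing A] [Module ℂ A]
    [SMulCommClass ℂ A A] {n : ℕ} [NeZero n] (hfaith : IsFaithful A) :
    Function.Injective (colMat (A := A) (n := n)) := by
  intro ξ η h
  funext i
  have h0 : colMat ξ i 0 = colMat η i 0 := by rw [h]
  simp only [colMat, Matrix.of_apply, if_pos rfl] at h0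
  exact Lmul_inj hfaith h0

lemma mul_colMat {A : Type*} [NonUnitalRing A] [Module ℂ A]
    [SMulCommClass ℂ A A] {n : ℕ} [NeZero n]
    (X : Matrix (Fin n) (Fin n) (Module.End ℂ A))
    (hX : ∀ i j, ∀ a b : A, X i j (a * b) = X i j a * b)
    (ξ : Fin n → A) :
    X * colMat ξ = colMat (psiMap X ξ) := by
  ext i j x
  simp only [Matrix.mul_apply, colMat, psiMap, Matrix.of_apply]
  by_cases hj : j = 0
  · simp only [hj, if_pos rfl]
    rw [LinearMap.coe_sum, Finset.sum_apply]
    show (∑ k, X i k ((Lmul (ξ k) : Module.End ℂ A) x)) = Lmul (∑ k, X i k (ξ k)) x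
    simp only [Lmul, LinearMap.coe_mk, AddHom.coe_mk, Finset.sum_mul]
    exact Finset.sum_congr rfl fun k _ => hX i k (ξ k) x
  · simp only [hj, if_neg hj, if_false]
    rw [LinearMap.coe_sum, Finset.sum_apply]
    show (∑ k, X i k ((0 : Module.End ℂ A) x)) = (0 : Module.End ℂ A) x
    simp

/-- If `A` is quadratik and faithful and `γ_g` denotes the restriction of
`Γ_g` to the first column `Aⁿ` of `Mₙ(A)`, then for all `g ∈ G`, `X ∈ B`,
`ξ ∈ Aⁿ` one has `ψ(Γ_g(X))(ξ) = γ_g(ψ(X)(γ_{g⁻¹}(ξ)))`; i.e. `ψ` intertwines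
`Γ` with the adjoint action of `γ`. -/
theorem stmt12 (A : Type*) [NonUnitalRing A] [Module ℂ A]
    [SMulCommClass ℂ A A] [IsScalarTower ℂ A A]
    (hquad : IsQuadratik A) (hfaith : IsFaithful A)
    (n : ℕ) [NeZero n]
    (G : Type*) [Group G]
    (B : NonUnitalSubalgebra ℂ (Matrix (Fin n) (Fin n) (Module.End ℂ A)))
    (hB : ∀ x : B, ∀ i j,
      MemLA ((x : Matrix (Fin n) (Fin n) (Module.End ℂ A)) i j))
    (hMnA : ∀ X : Matrix (Fin n) (Fin n) (Module.End ℂ A), InMnA X → X ∈ B)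
    (Γ : G →* RingAut B)
    (hΓlin : ∀ (g : G) (c : ℂ) (x : B), Γ g (c • x) = c • Γ g x)
    (α : G →* RingAut A)
    (hαlin : ∀ (g : G) (c : ℂ) (a : A), α g (c • a) = c • α g a)
    (hequiv : ∀ (g : G) (a : A),
      ((Γ g ⟨cornerA a, hMnA _ (cornerA_inMnA a)⟩ : B) :
          Matrix (Fin n) (Fin n) (Module.End ℂ A)) = cornerA (α g a))
    (γ : G → (Fin n → A) → (Fin n → A))
    (hγ : ∀ (g : G) (ξ : Fin n → A),
      ((Γ g ⟨colMat ξ, hMnA _ (colMat_inMnA ξ)⟩ : B) :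
          Matrix (Fin n) (Fin n) (Module.End ℂ A)) = colMat (γ g ξ)) :
    ∀ (g : G) (x : B) (ξ : Fin n → A),
      psiMap ((Γ g x : B) : Matrix (Fin n) (Fin n) (Module.End ℂ A)) ξ =
        γ g (psiMap ((x : B) : Matrix (Fin n) (Fin n) (Module.End ℂ A))
          (γ g⁻¹ ξ)) := by
  intro g x ξ
  -- γ g ∘ γ g⁻¹ = id
  have hid : γ g (γ g⁻¹ ξ) = ξ := by
    apply colMat_inj hfaith
    have h1 : (⟨colMat (γ g⁻¹ ξ), hMnA _ (colMat_inMnA _)⟩ : B) =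
        Γ g⁻¹ ⟨colMat ξ, hMnA _ (colMat_inMnA ξ)⟩ :=
      Subtype.ext (hγ g⁻¹ ξ).symm
    calc colMat (γ g (γ g⁻¹ ξ))
        = ((Γ g ⟨colMat (γ g⁻¹ ξ), hMnA _ (colMat_inMnA _)⟩ : B) :
            Matrix (Fin n) (Fin n) (Module.End ℂ A)) := (hγ g _).symm
      _ = ((Γ g (Γ g⁻¹ ⟨colMat ξ, hMnA _ (colMat_inMnA ξ)⟩) : B) :
            Matrix (Fin n) (Fin n) (Module.End ℂ A)) := by rw [h1]
      _ = colMat ξ := by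
            have : Γ g (Γ g⁻¹ ⟨colMat ξ, hMnA _ (colMat_inMnA ξ)⟩) =
                ⟨colMat ξ, hMnA _ (colMat_inMnA ξ)⟩ := by
            -- use that Γ g (Γ g⁻¹ y) = Γ (g * g⁻¹) y = y
              have h3 : ∀ y : B, Γ g (Γ g⁻¹ y) = y := by
                intro y
                have := map_mul Γ g g⁻¹
                simp only [mul_inv_cancel, map_one] at this
                calc Γ g (Γ g⁻¹ y) = (Γ g * Γ g⁻¹) y := rfl
                  _ = (1 : RingAut B) y := by rw [← this]
                  _ = y := rfl
              exact h3 _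
            rw [this]
  set m : B := ⟨colMat (γ g⁻¹ ξ), hMnA _ (colMat_inMnA _)⟩ with hm
  -- x * m = colMat (psiMap ↑x (γ g⁻¹ ξ))
  have hxm : (x * m : B) =
      ⟨colMat (psiMap ((x : B) : Matrix (Fin n) (Fin n) (Module.End ℂ A))
        (γ g⁻¹ ξ)), hMnA _ (colMat_inMnA _)⟩ := by
    apply Subtype.ext
    show ((x : Matrix (Fin n) (Fin n) (Module.End ℂ A)) * colMat (γ g⁻¹ ξ)) = _
    exact mul_colMat _ (fun i j => (hB x i j).1) _
  -- apply Γ g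
  have key : ((Γ g (x * m) : B) : Matrix (Fin n) (Fin n) (Module.End ℂ A)) =
      colMat (γ g (psiMap ((x : B) : Matrix (Fin n) (Fin n) (Module.End ℂ A))
        (γ g⁻¹ ξ))) := by
    rw [hxm]
    exact hγ g _
  have key2 : ((Γ g (x * m) : B) : Matrix (Fin n) (Fin n) (Module.End ℂ A)) =
      colMat (psiMap ((Γ g x : B) : Matrix (Fin n) (Fin n) (Module.End ℂ A)) ξ) := by
    rw [map_mul]
    show ((Γ g x : B) : Matrix (Fin n) (Fin n) (Module.End ℂ A)) *
        ((Γ g m : B) : Matrix (Fin n) (Fin n) (Module.End ℂ A)) = _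
    have hΓm : ((Γ g m : B) : Matrix (Fin n) (Fin n) (Module.End ℂ A)) =
        colMat ξ := by
      rw [hm]
      rw [hγ g (γ g⁻¹ ξ), hid]
    rw [hΓm]
    exact mul_colMat _ (fun i j => (hB (Γ g x) i j).1) _
  exact colMat_inj hfaith (key2.symm.trans key)
end
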